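/- arXiv:2206.01144 — 3 statements merged into one kernel-verified Lean document; each statement's English description precedes it below -/
import Mathlib

section
/- Let d ≥ 2 be an integer. Then the H¹-size of ψ_η tends to zero as η tends to zero: lim_{η → 0⁺} ( ∫_{ℝ^d} ψ_η(x)² dx + ∫_{B_η(0)} (|x| · log|x|)^{-2} dx ) = 0, where the limit is taken over η ∈ (0, e^{-1}). -/
open MeasureTheory Real Set Filter
open scoped Topology

lemma aux1 {r : ℝ} (h0 : 0 < r) (h1 : r ≤ 1) : r * Real.log r ^ 2 ≤ 4 := by
  set s := Real.sqrt r with hs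
  have hs0 : 0 < s := Real.sqrt_pos.mpr h0
  have hs1 : s ≤ 1 := by
    rw [hs, show (1:ℝ) = Real.sqrt 1 by simp]
    exact Real.sqrt_le_sqrt h1
  have hr : r = s ^ 2 := (Real.sq_sqrt h0.le).symm
  have hlog : Real.log r = 2 * Real.log s := by
    rw [hr, Real.log_pow]; push_cast; ring
  have hls : -Real.log s ≤ s⁻¹ := by
    have := Real.log_le_sub_one_of_pos (inv_pos.mpr hs0)
    rw [Real.log_inv] at this
    nlinarith [inv_pos.mpr hs0]
  have h2 : Real.log s ^ 2 ≤ (s⁻¹) ^ 2 := by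
    have hlneg : Real.log s ≤ 0 := Real.log_nonpos hs0.le hs1
    nlinarith [inv_pos.mpr hs0]
  have hss : s ^ 2 * (s⁻¹) ^ 2 = 1 := by field_simp
  calc r * Real.log r ^ 2 = 4 * (s ^ 2 * Real.log s ^ 2) := by rw [hlog, hr]; ring
  _ ≤ 4 * (s ^ 2 * (s⁻¹) ^ 2) := by nlinarith [sq_nonneg s, sq_nonneg s⁻¹]
  _ = 4 := by rw [hss]; norm_num
lemma auxB {η : ℝ} (h0 : 0 < η) (h1 : η < Real.exp (-1)) :
    IntegrableOn (fun r : ℝ => (r * Real.log r ^ 2)⁻¹) (Ioo 0 η) ∧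
      ∫ r in Ioo (0:ℝ) η, (r * Real.log r ^ 2)⁻¹ = (-Real.log η)⁻¹ := by
  set a : ℝ := -Real.log η with ha
  have hlogη : Real.log η < -1 := by
    have := Real.log_lt_log h0 h1
    rwa [Real.log_exp] at this
  have ha1 : 1 < a := by rw [ha]; linarith
  have ha0 : 0 < a := by linarith
  have hηa : Real.exp (-a) = η := by rw [ha, neg_neg, Real.exp_log h0]
  have himg : (fun t : ℝ => Real.exp (-t)) '' Ioi a = Ioo 0 η := by
    ext x
    constructor
    · rintro ⟨t, ht, rfl⟩
      refine ⟨Real.exp_pos _, ?_⟩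
      rw [← hηa]
      exact Real.exp_lt_exp.mpr (by simpa using ht)
    · rintro ⟨hx0, hxη⟩
      refine ⟨-Real.log x, ?_, by show Real.exp (-(-Real.log x)) = x; rw [neg_neg, Real.exp_log hx0]⟩
      have : Real.log x < Real.log η := Real.log_lt_log hx0 hxη
      simp only [mem_Ioi, ha]
      linarith
  have hderiv : ∀ t ∈ Ioi a, HasDerivWithinAt (fun t : ℝ => Real.exp (-t))
      (-Real.exp (-t)) (Ioi a) t := by
    intro t _
    have h : HasDerivAt (fun t : ℝ => Real.exp (-t)) (Real.exp (-t) * (-1)) t :=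
      (Real.hasDerivAt_exp (-t)).comp t (hasDerivAt_neg t)
    simpa [mul_neg_one] using h.hasDerivWithinAt
  have hinj : InjOn (fun t : ℝ => Real.exp (-t)) (Ioi a) := by
    intro x _ y _ h
    have := Real.exp_injective h
    linarith [neg_injective this]
  have hcongr : ∀ t ∈ Ioi a,
      |-Real.exp (-t)| • (Real.exp (-t) * Real.log (Real.exp (-t)) ^ 2)⁻¹ = (t ^ 2)⁻¹ := by
    intro t ht
    have ht0 : (0:ℝ) < t := lt_trans ha0 ht
    have he : Real.exp (-t) ≠ 0 := (Real.exp_pos _).ne'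
    rw [abs_neg, abs_of_pos (Real.exp_pos _), Real.log_exp, smul_eq_mul,
      show (-t:ℝ) ^ 2 = t ^ 2 by ring, mul_inv, ← mul_assoc, mul_inv_cancel₀ he, one_mul]
  have hint2 : IntegrableOn (fun t : ℝ => (t ^ 2)⁻¹) (Ioi a) := by
    refine (integrableOn_Ioi_rpow_of_lt (by norm_num : (-2:ℝ) < -1) ha0).congr_fun
      (fun t ht => ?_) measurableSet_Ioi
    have ht0 : (0:ℝ) < t := lt_trans ha0 ht
    show t ^ (-2:ℝ) = (t ^ 2)⁻¹
    rw [Real.rpow_neg ht0.le, Real.rpow_two]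
  have hval2 : ∫ t in Ioi a, (t ^ 2)⁻¹ = a⁻¹ := by
    rw [setIntegral_congr_fun measurableSet_Ioi (fun t ht => ?_)]
    · rw [integral_Ioi_rpow_of_lt (by norm_num : (-2:ℝ) < -1) ha0]
      norm_num
      rw [Real.rpow_neg_one]
    · show (t ^ 2)⁻¹ = t ^ (-2:ℝ)
      have ht0 : (0:ℝ) < t := lt_trans ha0 ht
      rw [Real.rpow_neg ht0.le, Real.rpow_two]
  constructor
  · rw [← himg,
      integrableOn_image_iff_integrableOn_abs_deriv_smul measurableSet_Ioi hderiv hinj]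
    exact hint2.congr_fun (fun t ht => (hcongr t ht).symm ▸ rfl) measurableSet_Ioi
  · rw [← himg, integral_image_eq_integral_abs_deriv_smul measurableSet_Ioi hderiv hinj,
      setIntegral_congr_fun measurableSet_Ioi hcongr, hval2]


/-- The cut-off test function `ψ_η(x) = log(-log|x|) - log(-log η)` on `0 < |x| < η`. -/
noncomputable def psiEta (d : ℕ) (η : ℝ) (x : EuclideanSpace ℝ (Fin d)) : ℝ :=
  if 0 < ‖x‖ ∧ ‖x‖ < η then Real.log (-Real.log ‖x‖) - Real.log (-Real.log η) else 0

section Main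

variable {d : ℕ}

lemma eqA (hd : 2 ≤ d) {η : ℝ} :
    (∫ x : EuclideanSpace ℝ (Fin d), (psiEta d η x) ^ 2) =
      (d:ℝ) * ((volume (Metric.ball (0 : EuclideanSpace ℝ (Fin d)) 1)).toReal *
        ∫ y in Ioo (0:ℝ) η, y ^ (d-1) *
          (Real.log (-Real.log y) - Real.log (-Real.log η)) ^ 2) := by
  haveI : Nonempty (Fin d) := ⟨⟨0, by omega⟩⟩
  have h := MeasureTheory.integral_fun_norm_addHaar
    (volume : Measure (EuclideanSpace ℝ (Fin d)))
    (fun y : ℝ => (if 0 < y ∧ y < η then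
      Real.log (-Real.log y) - Real.log (-Real.log η) else 0) ^ 2)
  rw [finrank_euclideanSpace_fin] at h
  have hfe : (fun x : EuclideanSpace ℝ (Fin d) => (psiEta d η x) ^ 2) =
      fun x : EuclideanSpace ℝ (Fin d) =>
      (fun y : ℝ => (if 0 < y ∧ y < η then
        Real.log (-Real.log y) - Real.log (-Real.log η) else 0) ^ 2) ‖x‖ := rfl
  rw [hfe, h, nsmul_eq_mul, smul_eq_mul, measureReal_def,
    setIntegral_eq_of_subset_of_forall_diff_eq_zero measurableSet_Ioi
      Set.Ioo_subset_Ioi_self (fun y hy => ?_),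
    setIntegral_congr_fun measurableSet_Ioo (fun y hy => ?_)]
  · rw [smul_eq_mul, if_pos ⟨hy.1, hy.2⟩]
  · rw [if_neg, smul_eq_mul]
    · norm_num
    · rintro ⟨hy1, hy2⟩
      exact hy.2 ⟨hy1, hy2⟩

lemma eqB (hd : 2 ≤ d) {η : ℝ} :
    (∫ x in Metric.ball (0 : EuclideanSpace ℝ (Fin d)) η,
        (‖x‖ * Real.log ‖x‖)⁻¹ ^ 2) =
      (d:ℝ) * ((volume (Metric.ball (0 : EuclideanSpace ℝ (Fin d)) 1)).toReal *
        ∫ y in Ioo (0:ℝ) η, y ^ (d-1) * ((y * Real.log y)⁻¹) ^ 2) := by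
  haveI : Nonempty (Fin d) := ⟨⟨0, by omega⟩⟩
  have h := MeasureTheory.integral_fun_norm_addHaar
    (volume : Measure (EuclideanSpace ℝ (Fin d)))
    (fun y : ℝ => if y < η then ((y * Real.log y)⁻¹) ^ 2 else 0)
  rw [finrank_euclideanSpace_fin] at h
  have hfe : (fun x : EuclideanSpace ℝ (Fin d) => (Metric.ball (0 : EuclideanSpace ℝ (Fin d)) η).indicator
      (fun x => (‖x‖ * Real.log ‖x‖)⁻¹ ^ 2) x) =
      fun x : EuclideanSpace ℝ (Fin d) =>
      (fun y : ℝ => if y < η then ((y * Real.log y)⁻¹) ^ 2 else 0) ‖x‖ := by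
    funext x
    by_cases hx : ‖x‖ < η
    · rw [Set.indicator_of_mem (mem_ball_zero_iff.mpr hx)]
      exact (if_pos hx).symm
    · rw [Set.indicator_of_notMem (fun hmem => hx (mem_ball_zero_iff.mp hmem))]
      exact (if_neg hx).symm
  rw [← MeasureTheory.integral_indicator measurableSet_ball, hfe, h, nsmul_eq_mul, smul_eq_mul, measureReal_def,
    setIntegral_eq_of_subset_of_forall_diff_eq_zero measurableSet_Ioi
      Set.Ioo_subset_Ioi_self (fun y hy => ?_),
    setIntegral_congr_fun measurableSet_Ioo (fun y hy => ?_)]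
  · rw [smul_eq_mul, if_pos hy.2]
  · rw [if_neg, smul_eq_mul]
    · norm_num
    · intro hy2
      exact hy.2 ⟨mem_Ioi.mp hy.1, hy2⟩

lemma boundA (hd : 2 ≤ d) {η : ℝ} (h0 : 0 < η) (h1 : η < Real.exp (-1)) :
    (∫ y in Ioo (0:ℝ) η, y ^ (d-1) *
      (Real.log (-Real.log y) - Real.log (-Real.log η)) ^ 2) ≤
      4 * ((-Real.log η)⁻¹) ^ 2 := by
  have hη1 : η < 1 := lt_trans h1 (by rw [Real.exp_lt_one_iff]; norm_num)
  have hlogη : Real.log η < -1 := by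
    have := Real.log_lt_log h0 h1
    rwa [Real.log_exp] at this
  set v : ℝ := (-Real.log η)⁻¹ with hv
  have hb : ∀ y ∈ Ioo (0:ℝ) η, ‖y ^ (d-1) *
      (Real.log (-Real.log y) - Real.log (-Real.log η)) ^ 2‖ ≤ 4 * v ^ 2 := by
    intro y hy
    obtain ⟨hy0, hyη⟩ := hy
    have hy1 : y < 1 := lt_trans hyη hη1
    have hlogy : Real.log y < Real.log η := Real.log_lt_log hy0 hyη
    have hmη : (0:ℝ) < -Real.log η := by linarith
    have hmy : -Real.log η < -Real.log y := by linarith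
    set L := Real.log (-Real.log y) - Real.log (-Real.log η) with hL
    have hLnn : 0 ≤ L := sub_nonneg.mpr (Real.log_le_log hmη hmy.le)
    have hLle : L ≤ (-Real.log y) * v := by
      have hrat : L = Real.log ((-Real.log y) / (-Real.log η)) := by
        rw [Real.log_div (by linarith) (by linarith)]
      have hratpos : 0 < (-Real.log y) / (-Real.log η) := div_pos (by linarith) hmη
      have := Real.log_le_sub_one_of_pos hratpos
      rw [← hrat, div_eq_mul_inv] at this
      rw [hv]
      linarith
    have hL2 : L ^ 2 ≤ (Real.log y ^ 2) * v ^ 2 := by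
      calc L ^ 2 ≤ ((-Real.log y) * v) ^ 2 := pow_le_pow_left₀ hLnn hLle 2
      _ = (Real.log y ^ 2) * v ^ 2 := by ring
    have hyd : y ^ (d-1) ≤ y := by
      have := pow_le_pow_of_le_one hy0.le hy1.le (show 1 ≤ d - 1 by omega)
      simpa using this
    have haux : y * Real.log y ^ 2 ≤ 4 := aux1 hy0 hy1.le
    rw [Real.norm_eq_abs, abs_of_nonneg (mul_nonneg (pow_nonneg hy0.le _) (sq_nonneg _))]
    calc y ^ (d-1) * L ^ 2 ≤ y * ((Real.log y ^ 2) * v ^ 2) :=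
          mul_le_mul hyd hL2 (sq_nonneg _) hy0.le
    _ = (y * Real.log y ^ 2) * v ^ 2 := by ring
    _ ≤ 4 * v ^ 2 := by nlinarith [sq_nonneg v]
  have hnorm := norm_setIntegral_le_of_norm_le_const (measure_Ioo_lt_top (μ := volume) (a := (0:ℝ)) (b := η))
    hb
  have hvol : (volume (Ioo (0:ℝ) η)).toReal = η := by
    rw [Real.volume_Ioo, ENNReal.toReal_ofReal (by linarith)]
    ring
  rw [measureReal_def, hvol, Real.norm_eq_abs] at hnorm
  have h4 : (4 * v ^ 2) * η ≤ 4 * v ^ 2 := by nlinarith [sq_nonneg v]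
  exact le_trans (le_trans (le_abs_self _) hnorm) h4

lemma boundB (hd : 2 ≤ d) {η : ℝ} (h0 : 0 < η) (h1 : η < Real.exp (-1)) :
    (∫ y in Ioo (0:ℝ) η, y ^ (d-1) * ((y * Real.log y)⁻¹) ^ 2) ≤ (-Real.log η)⁻¹ := by
  have hη1 : η < 1 := lt_trans h1 (by rw [Real.exp_lt_one_iff]; norm_num)
  have hlogη : Real.log η < -1 := by
    have := Real.log_lt_log h0 h1
    rwa [Real.log_exp] at this
  obtain ⟨hbigInt, hbigVal⟩ := auxB h0 h1
  have hpt : ∀ y ∈ Ioo (0:ℝ) η,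
      y ^ (d-1) * ((y * Real.log y)⁻¹) ^ 2 ≤ (y * Real.log y ^ 2)⁻¹ := by
    intro y hy
    obtain ⟨hy0, hyη⟩ := hy
    have hy1 : y < 1 := lt_trans hyη hη1
    have hlogy : Real.log y < Real.log η := Real.log_lt_log hy0 hyη
    have hlneg : Real.log y < 0 := by linarith
    have hL2 : 0 < Real.log y ^ 2 := pow_two_pos_of_ne_zero (ne_of_lt hlneg)
    have hyd : y ^ (d-1) ≤ y := by
      have := pow_le_pow_of_le_one hy0.le hy1.le (show 1 ≤ d - 1 by omega)
      simpa using this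
    have hrw : ((y * Real.log y)⁻¹) ^ 2 = (y ^ 2 * Real.log y ^ 2)⁻¹ := by
      rw [inv_pow, mul_pow]
    have hrw2 : y * (y ^ 2 * Real.log y ^ 2)⁻¹ = (y * Real.log y ^ 2)⁻¹ := by
      field_simp
    rw [hrw, ← hrw2]
    exact mul_le_mul_of_nonneg_right hyd (by positivity)
  have hsmallMeas : Measurable (fun y : ℝ => y ^ (d-1) * ((y * Real.log y)⁻¹) ^ 2) :=
    (measurable_id.pow_const (d-1)).mul
      (((measurable_id.mul Real.measurable_log).inv).pow_const 2)
  have hsmallInt : IntegrableOn (fun y : ℝ => y ^ (d-1) * ((y * Real.log y)⁻¹) ^ 2)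
      (Ioo (0:ℝ) η) := by
    refine Integrable.mono' hbigInt hsmallMeas.aestronglyMeasurable ?_
    refine (ae_restrict_iff' measurableSet_Ioo).mpr (Eventually.of_forall fun y hy => ?_)
    rw [Real.norm_eq_abs, abs_of_nonneg (mul_nonneg (pow_nonneg hy.1.le _) (sq_nonneg _))]
    exact hpt y hy
  calc (∫ y in Ioo (0:ℝ) η, y ^ (d-1) * ((y * Real.log y)⁻¹) ^ 2)
      ≤ ∫ y in Ioo (0:ℝ) η, (y * Real.log y ^ 2)⁻¹ :=
        setIntegral_mono_on hsmallInt hbigInt measurableSet_Ioo hpt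
  _ = (-Real.log η)⁻¹ := hbigVal

end Main

theorem stmt3 (d : ℕ) (hd : 2 ≤ d) :
    Filter.Tendsto
      (fun η : ℝ =>
        (∫ x : EuclideanSpace ℝ (Fin d), (psiEta d η x) ^ 2) +
          ∫ x in Metric.ball (0 : EuclideanSpace ℝ (Fin d)) η, (‖x‖ * Real.log ‖x‖)⁻¹ ^ 2)
      (nhdsWithin 0 (Set.Ioo 0 (Real.exp (-1)))) (nhds 0) := by

  set c : ℝ := (volume (Metric.ball (0 : EuclideanSpace ℝ (Fin d)) 1)).toReal with hc
  have hc0 : 0 ≤ c := ENNReal.toReal_nonneg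
  set v : ℝ → ℝ := fun η => (-Real.log η)⁻¹ with hv
  have hvt : Tendsto v (𝓝[Ioo 0 (Real.exp (-1))] 0) (𝓝 0) := by
    have h1 : Tendsto Real.log (𝓝[Ioo 0 (Real.exp (-1))] 0) atBot :=
      Real.tendsto_log_nhdsGT_zero.mono_left
        (nhdsWithin_mono 0 Set.Ioo_subset_Ioi_self)
    exact tendsto_inv_atTop_zero.comp (tendsto_neg_atBot_atTop.comp h1)
  have hUt : Tendsto (fun η => (d:ℝ) * c * (4 * v η ^ 2 + v η))
      (𝓝[Ioo 0 (Real.exp (-1))] 0) (𝓝 0) := by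
    have h := (((hvt.pow 2).const_mul (4:ℝ)).add hvt).const_mul ((d:ℝ) * c)
    simpa using h
  have hAnn : ∀ η : ℝ, 0 ≤ ∫ y in Ioo (0:ℝ) η, y ^ (d-1) *
      (Real.log (-Real.log y) - Real.log (-Real.log η)) ^ 2 := fun η =>
    setIntegral_nonneg measurableSet_Ioo fun y hy =>
      mul_nonneg (pow_nonneg hy.1.le _) (sq_nonneg _)
  have hBnn : ∀ η : ℝ, 0 ≤ ∫ y in Ioo (0:ℝ) η, y ^ (d-1) * ((y * Real.log y)⁻¹) ^ 2 :=
    fun η => setIntegral_nonneg measurableSet_Ioo fun y hy =>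
      mul_nonneg (pow_nonneg hy.1.le _) (sq_nonneg _)
  refine squeeze_zero' ?_ ?_ hUt
  · filter_upwards [self_mem_nhdsWithin] with η hη
    rw [eqA hd, eqB hd, ← hc]
    have := hAnn η
    have := hBnn η
    positivity
  · filter_upwards [self_mem_nhdsWithin] with η hη
    obtain ⟨h0, h1⟩ := hη
    rw [eqA hd, eqB hd, ← hc]
    have hA := boundA hd h0 h1 (d := d)
    have hB := boundB hd h0 h1 (d := d)
    have hsum := add_le_add hA hB
    calc (d:ℝ) * (c * ∫ y in Ioo (0:ℝ) η, y ^ (d-1) *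
          (Real.log (-Real.log y) - Real.log (-Real.log η)) ^ 2) +
        (d:ℝ) * (c * ∫ y in Ioo (0:ℝ) η, y ^ (d-1) * ((y * Real.log y)⁻¹) ^ 2)
        = (d:ℝ) * c * ((∫ y in Ioo (0:ℝ) η, y ^ (d-1) *
          (Real.log (-Real.log y) - Real.log (-Real.log η)) ^ 2) +
          ∫ y in Ioo (0:ℝ) η, y ^ (d-1) * ((y * Real.log y)⁻¹) ^ 2) := by ring
    _ ≤ (d:ℝ) * c * (4 * v η ^ 2 + v η) :=
        mul_le_mul_of_nonneg_left hsum (by positivity)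
end

section
/- Let d ≥ 2 be an integer, let R > 0, and let T ∈ (0, ∞]. Let F : [0,R] × [0,T) → ℝ be continuous, and suppose that at every point (r,t) ∈ (0,R) × (0,T) the partial derivatives F_t(r,t), F_r(r,t) and F_{rr}(r,t) exist and satisfy F_t(r,t) ≤ F_{rr}(r,t) + ((1−d)/r) F_r(r,t) − F(r,t). Assume moreover that F(0,t) ≤ 0 and F(R,t) ≤ 0 for all t ∈ [0,T), and F(r,0) ≤ 0 for all r ∈ [0,R]. Then F(r,t) ≤ 0 for all (r,t) ∈ [0,R] × [0,T). -/
open MeasureTheory Real Set ENNReal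

theorem stmt10 (d : ℕ) (hd : 2 ≤ d) (R : ℝ) (hR : 0 < R) (T : ℝ≥0∞) (hT : 0 < T)
    (F Ft Fr Frr : ℝ → ℝ → ℝ)
    (hF_cont : ContinuousOn (fun p : ℝ × ℝ => F p.1 p.2)
      (Set.Icc 0 R ×ˢ {t : ℝ | 0 ≤ t ∧ ENNReal.ofReal t < T}))
    (hFt : ∀ r t : ℝ, r ∈ Set.Ioo 0 R → 0 < t → ENNReal.ofReal t < T →
      HasDerivAt (fun τ => F r τ) (Ft r t) t)
    (hFr : ∀ r t : ℝ, r ∈ Set.Ioo 0 R → 0 < t → ENNReal.ofReal t < T →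
      HasDerivAt (fun ρ => F ρ t) (Fr r t) r)
    (hFrr : ∀ r t : ℝ, r ∈ Set.Ioo 0 R → 0 < t → ENNReal.ofReal t < T →
      HasDerivAt (fun ρ => Fr ρ t) (Frr r t) r)
    (hineq : ∀ r t : ℝ, r ∈ Set.Ioo 0 R → 0 < t → ENNReal.ofReal t < T →
      Ft r t ≤ Frr r t + ((1 - (d : ℝ)) / r) * Fr r t - F r t)
    (hbd0 : ∀ t : ℝ, 0 ≤ t → ENNReal.ofReal t < T → F 0 t ≤ 0)
    (hbdR : ∀ t : ℝ, 0 ≤ t → ENNReal.ofReal t < T → F R t ≤ 0)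
    (hinit : ∀ r : ℝ, r ∈ Set.Icc 0 R → F r 0 ≤ 0) :
    ∀ r t : ℝ, r ∈ Set.Icc 0 R → 0 ≤ t → ENNReal.ofReal t < T → F r t ≤ 0 := by
  intro r₀ t₀ hr₀ ht₀ hT₀
  by_contra hpos
  push_neg at hpos
  set ε : ℝ := F r₀ t₀ / (2 * (t₀ + 1)) with hε
  have ht₀1 : (0:ℝ) < t₀ + 1 := by linarith
  have hεpos : 0 < ε := by
    apply div_pos hpos; linarith
  have hεt₀ : ε * t₀ < F r₀ t₀ := by
    have h1 : ε * (t₀ + 1) = F r₀ t₀ / 2 := by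
      rw [hε, div_mul_eq_mul_div, div_eq_div_iff (ne_of_gt (by linarith)) (by norm_num)]; ring
    nlinarith
  set D : Set (ℝ × ℝ) := Set.Icc 0 R ×ˢ {t : ℝ | 0 ≤ t ∧ ENNReal.ofReal t < T} with hD
  set K : Set (ℝ × ℝ) := Set.Icc 0 R ×ˢ Set.Icc 0 t₀ with hK
  have hKD : K ⊆ D := by
    rintro ⟨r, t⟩ ⟨h1, h2⟩
    exact ⟨h1, h2.1, lt_of_le_of_lt (ENNReal.ofReal_le_ofReal h2.2) hT₀⟩
  have hKcomp : IsCompact K := isCompact_Icc.prod isCompact_Icc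
  set G : ℝ × ℝ → ℝ := fun p => F p.1 p.2 - ε * p.2 with hG
  have hGcont : ContinuousOn G K :=
    (hF_cont.mono hKD).sub (continuous_const.mul continuous_snd).continuousOn
  have hp0K : (r₀, t₀) ∈ K := ⟨hr₀, ⟨ht₀, le_refl _⟩⟩
  obtain ⟨p, hpK, hmax⟩ := hKcomp.exists_isMaxOn ⟨_, hp0K⟩ hGcont
  have hmax' : ∀ q ∈ K, G q ≤ G p := fun q hq => hmax hq
  have hpr : p.1 ∈ Set.Icc 0 R := hpK.1
  have hpt : p.2 ∈ Set.Icc 0 t₀ := hpK.2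
  have hT₁ : ENNReal.ofReal p.2 < T :=
    lt_of_le_of_lt (ENNReal.ofReal_le_ofReal hpt.2) hT₀
  have hGp : 0 < G p := by
    have h1 : G (r₀, t₀) ≤ G p := hmax' _ hp0K
    have h2 : G (r₀, t₀) = F r₀ t₀ - ε * t₀ := rfl
    linarith
  have hFp : 0 < F p.1 p.2 := by
    have h2 : G p = F p.1 p.2 - ε * p.2 := rfl
    nlinarith [mul_nonneg hεpos.le hpt.1]
  have hr1 : 0 < p.1 := by
    rcases lt_or_eq_of_le hpr.1 with h | h
    · exact h
    · exfalso
      have h1 : F 0 p.2 ≤ 0 := hbd0 p.2 hpt.1 hT₁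
      have h2 : G p = F p.1 p.2 - ε * p.2 := rfl
      rw [h] at h1
      nlinarith [mul_nonneg hεpos.le hpt.1]
  have hr2 : p.1 < R := by
    rcases lt_or_eq_of_le hpr.2 with h | h
    · exact h
    · exfalso
      have h1 : F R p.2 ≤ 0 := hbdR p.2 hpt.1 hT₁
      have h2 : G p = F p.1 p.2 - ε * p.2 := rfl
      rw [h] at h2
      nlinarith [mul_nonneg hεpos.le hpt.1]
  have hrI : p.1 ∈ Set.Ioo 0 R := ⟨hr1, hr2⟩
  have htpos : 0 < p.2 := by
    rcases lt_or_eq_of_le hpt.1 with h | h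
    · exact h
    · exfalso
      have h1 : F p.1 0 ≤ 0 := hinit p.1 hpr
      have h2 : G p = F p.1 p.2 - ε * p.2 := rfl
      rw [← h] at h2
      nlinarith
  -- First derivative in r vanishes at the max
  have hFr0 : Fr p.1 p.2 = 0 := by
    have hloc : IsLocalMax (fun ρ => F ρ p.2) p.1 := by
      have hnb : Set.Ioo 0 R ∈ nhds p.1 := isOpen_Ioo.mem_nhds hrI
      filter_upwards [hnb] with ρ hρ
      have hqK : (ρ, p.2) ∈ K := ⟨Set.Ioo_subset_Icc_self hρ, hpt⟩
      have := hmax' _ hqK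
      have h2 : G (ρ, p.2) = F ρ p.2 - ε * p.2 := rfl
      have h3 : G p = F p.1 p.2 - ε * p.2 := rfl
      simp only [h2, h3] at this
      linarith
    exact hloc.hasDerivAt_eq_zero (hFr p.1 p.2 hrI htpos hT₁)
  -- Second derivative in r is nonpositive at the max
  have hFrr0 : Frr p.1 p.2 ≤ 0 := by
    by_contra hc
    push_neg at hc
    have h2 := hFrr p.1 p.2 hrI htpos hT₁
    rw [hasDerivAt_iff_tendsto_slope] at h2
    have hev : ∀ᶠ ρ in nhdsWithin p.1 {p.1}ᶜ,
        0 < slope (fun ρ => Fr ρ p.2) p.1 ρ := h2.eventually (lt_mem_nhds hc)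
    have hev' : ∀ᶠ ρ in nhdsWithin p.1 (Set.Ioi p.1),
        0 < slope (fun ρ => Fr ρ p.2) p.1 ρ :=
      hev.filter_mono (nhdsWithin_mono _ (fun x hx => ne_of_gt hx))
    have hevR : ∀ᶠ ρ in nhdsWithin p.1 (Set.Ioi p.1), ρ < R :=
      (eventually_lt_nhds hr2).filter_mono nhdsWithin_le_nhds
    obtain ⟨u, hu, hsub⟩ :=
      mem_nhdsGT_iff_exists_Ioo_subset.mp (hev'.and hevR)
    have hu' : p.1 < u := hu
    set b : ℝ := (p.1 + u) / 2 with hb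
    have hbmem : b ∈ Set.Ioo p.1 u := ⟨by simp only [hb]; linarith, by simp only [hb]; linarith⟩
    have hbR : b < R := (hsub hbmem).2
    have hbgt : p.1 < b := hbmem.1
    have hFrpos : ∀ ρ ∈ Set.Ioo p.1 b, 0 < Fr ρ p.2 := by
      intro ρ hρ
      have hs := (hsub ⟨hρ.1, hρ.2.trans hbmem.2⟩).1
      rw [slope_def_field, hFr0] at hs
      have hρp : 0 < ρ - p.1 := by linarith [hρ.1]
      have := div_pos_iff.mp hs
      rcases this with ⟨h1, _⟩ | ⟨_, h2⟩
      · linarith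
      · linarith
    have hslice : ContinuousOn (fun ρ => F ρ p.2) (Set.Icc 0 R) := by
      have hc1 : ContinuousOn (fun ρ : ℝ => ((ρ, p.2) : ℝ × ℝ)) (Set.Icc 0 R) :=
        (continuous_id.prodMk continuous_const).continuousOn
      have := hF_cont.comp hc1 (fun ρ hρ => by exact ⟨hρ, hpt.1, hT₁⟩)
      exact this
    have hmono : StrictMonoOn (fun ρ => F ρ p.2) (Set.Icc p.1 b) := by
      apply strictMonoOn_of_deriv_pos (convex_Icc _ _)
        (hslice.mono (Set.Icc_subset_Icc hr1.le hbR.le))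
      intro x hx
      rw [interior_Icc] at hx
      have hx' : x ∈ Set.Ioo 0 R := ⟨hr1.trans hx.1, hx.2.trans hbR⟩
      rw [(hFr x p.2 hx' htpos hT₁).deriv]
      exact hFrpos x hx
    have hlt : F p.1 p.2 < F b p.2 :=
      hmono (Set.left_mem_Icc.mpr hbgt.le) (Set.right_mem_Icc.mpr hbgt.le) hbgt
    have hbK : (b, p.2) ∈ K := ⟨⟨by linarith, hbR.le⟩, hpt⟩
    have hle := hmax' _ hbK
    have h2 : G (b, p.2) = F b p.2 - ε * p.2 := rfl
    have h3 : G p = F p.1 p.2 - ε * p.2 := rfl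
    simp only [h2, h3] at hle
    linarith
  -- Time derivative is at least ε at the max
  have hFtε : ε ≤ Ft p.1 p.2 := by
    have hd1 : HasDerivAt (fun t => F p.1 t - ε * t) (Ft p.1 p.2 - ε) p.2 := by
      have := (hFt p.1 p.2 hrI htpos hT₁).sub ((hasDerivAt_id p.2).const_mul ε)
      rw [mul_one] at this
      exact this
    have hdw := hd1.hasDerivWithinAt (s := Set.Iio p.2)
    rw [hasDerivWithinAt_iff_tendsto_slope] at hdw
    have hss : Set.Iio p.2 \ {p.2} = Set.Iio p.2 := by
      apply Set.diff_singleton_eq_self; simp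
    rw [hss] at hdw
    have hev : ∀ᶠ t in nhdsWithin p.2 (Set.Iio p.2),
        0 ≤ slope (fun t => F p.1 t - ε * t) p.2 t := by
      have hmem : Set.Ioo 0 p.2 ∈ nhdsWithin p.2 (Set.Iio p.2) :=
        Ioo_mem_nhdsLT_of_mem ⟨htpos, le_refl _⟩
      filter_upwards [hmem] with t ht
      have hqK : (p.1, t) ∈ K := ⟨hpr, ⟨ht.1.le, ht.2.le.trans hpt.2⟩⟩
      have hle := hmax' _ hqK
      have h2 : G (p.1, t) = F p.1 t - ε * t := rfl
      have h3 : G p = F p.1 p.2 - ε * p.2 := rfl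
      simp only [h2, h3] at hle
      rw [slope_def_field]
      rw [div_nonneg_iff]
      right
      constructor
      · linarith
      · linarith [ht.2]
    have := ge_of_tendsto hdw hev
    linarith
  have hfinal := hineq p.1 p.2 hrI htpos hT₁
  rw [hFr0] at hfinal
  simp only [mul_zero] at hfinal
  linarith
end

section
/- Let R > 0, K ≥ 0 and m₀ > 0. Let c : [0,R] → ℝ be differentiable, nondecreasing, and positive (c(r) > 0 for all r ∈ [0,R]), and suppose c'(r) ≤ K r c(r) for all r ∈ (0,R). If there exists r₀ ∈ [0,R] with c(r₀) ≥ m₀, then c(r) ≥ m₀ · exp(−K R² / 2) for all r ∈ [0,R]. -/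
open Real Set

theorem stmt11 (R K m₀ : ℝ) (hR : 0 < R) (hK : 0 ≤ K) (hm₀ : 0 < m₀)
    (c : ℝ → ℝ) (hc_diff : ∀ r ∈ Set.Icc 0 R, DifferentiableAt ℝ c r)
    (hc_mono : MonotoneOn c (Set.Icc 0 R))
    (hc_pos : ∀ r ∈ Set.Icc 0 R, 0 < c r)
    (hc_deriv : ∀ r ∈ Set.Ioo 0 R, deriv c r ≤ K * r * c r)
    (r₀ : ℝ) (hr₀ : r₀ ∈ Set.Icc 0 R) (hc_r₀ : m₀ ≤ c r₀) :
    ∀ r ∈ Set.Icc 0 R, m₀ * Real.exp (-K * R ^ 2 / 2) ≤ c r := by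
  have hexp_le_one : Real.exp (-K * R ^ 2 / 2) ≤ 1 := by
    rw [Real.exp_le_one_iff]
    nlinarith
  set E : ℝ → ℝ := fun x => Real.exp (-(K / 2) * x ^ 2) with hE
  have hEderiv : ∀ x, HasDerivAt E (E x * (-K * x)) x := by
    intro x
    have h1 : HasDerivAt (fun x : ℝ => -(K / 2) * x ^ 2) (-(K / 2) * (2 * x ^ 1)) x :=
      (hasDerivAt_pow 2 x).const_mul (-(K / 2))
    have h2 := h1.exp
    convert h2 using 1
    simp [hE]
    ring
  have hEpos : ∀ x, 0 < E x := fun x => Real.exp_pos _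
  have hEle1 : ∀ x, E x ≤ 1 := by
    intro x
    rw [hE]
    simp only
    rw [Real.exp_le_one_iff]
    nlinarith [sq_nonneg x]
  have hg : AntitoneOn (fun x => c x * E x) (Set.Icc 0 R) := by
    apply antitoneOn_of_deriv_nonpos (convex_Icc 0 R)
    · exact ContinuousOn.mul
        (fun x hx => (hc_diff x hx).continuousAt.continuousWithinAt)
        (fun x _ => ((hEderiv x).differentiableAt.continuousAt).continuousWithinAt)
    · intro x hx
      rw [interior_Icc] at hx
      exact ((hc_diff x (Ioo_subset_Icc_self hx)).mul (hEderiv x).differentiableAt).differentiableWithinAt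
    · intro x hx
      rw [interior_Icc] at hx
      have hd := hc_diff x (Ioo_subset_Icc_self hx)
      have hder : HasDerivAt (fun x => c x * E x)
          (deriv c x * E x + c x * (E x * (-K * x))) x :=
        hd.hasDerivAt.mul (hEderiv x)
      rw [hder.deriv]
      have h := hc_deriv x hx
      nlinarith [mul_le_mul_of_nonneg_right h (hEpos x).le]
  intro r hr
  rcases le_total r₀ r with hle | hle
  · have h1 : c r₀ ≤ c r := hc_mono hr₀ hr hle
    calc m₀ * Real.exp (-K * R ^ 2 / 2) ≤ m₀ * 1 := by
          exact mul_le_mul_of_nonneg_left hexp_le_one hm₀.le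
      _ = m₀ := mul_one m₀
      _ ≤ c r₀ := hc_r₀
      _ ≤ c r := h1
  · have h1 : c r₀ * E r₀ ≤ c r * E r := hg hr hr₀ hle
    have h2 : Real.exp (-K * R ^ 2 / 2) ≤ E r₀ := by
      rw [hE]
      simp only
      apply Real.exp_le_exp.mpr
      have h3 : r₀ ^ 2 ≤ R ^ 2 := by nlinarith [hr₀.1, hr₀.2]
      nlinarith
    have h4 : m₀ * Real.exp (-K * R ^ 2 / 2) ≤ c r₀ * E r₀ :=
      mul_le_mul hc_r₀ h2 (Real.exp_pos _).le (hc_pos r₀ hr₀).le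
    have h5 : c r * E r ≤ c r := by
      nlinarith [hEle1 r, hc_pos r hr, hEpos r]
    linarith
end
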